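/- The set D of the construction is convex, symmetric about the origin, and meets every line through the origin of K² in a segment [-x, x] with x ≠ 0; hence D is the unit disc of a norm on K². -/

import Mathlib

/-!
`D = discD v` is an intersection of closed half-planes, hence convex, and it is symmetric by
construction. An arbitrary ordered field need not have suprema, so the boundary point on
each ray has to be exhibited. A ray in the upper half-plane leaves `D` through the segment from
`(1, 0)` to `(0, 1)`, or through the first edge `[v k, v (k + 1)]` of the chain that it crosses,
or, when it passes to the left of every vertex, through the line `y = 1`. In each case the exit
point lies in `D` and on a supporting line of `D`, so no larger multiple does. The only analytic
input is that the (rational) vertices converge to `(aa - bb - 1, 1)`. The norm is the gauge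
`u ↦ 1 / r`, where `r • u` is the boundary point on the ray through `u`.
-/

open Pointwise

/-- The cross product test: positive when `w` is on the left of the directed line from `p` to `r`. -/
def cross {K : Type*} [Field K] [LinearOrder K] [IsStrictOrderedRing K] (p r w : K × K) : K :=
  (r.1 - p.1) * (w.2 - p.2) - (r.2 - p.2) * (w.1 - p.1)

/-- The closed half-plane bounded by the line through `p` and `r` that contains the origin
(assuming the origin is not on that line). -/
def halfPlane {K : Type*} [Field K] [LinearOrder K] [IsStrictOrderedRing K] (p r : K × K) : Set (K × K) :=
  {w | 0 ≤ cross p r w * cross p r (0, 0)}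

/-- The unit disc `D` of the construction, determined by the vertices `v k`. -/
def discD {K : Type*} [Field K] [LinearOrder K] [IsStrictOrderedRing K] (v : ℕ → K × K) : Set (K × K) :=
  (⋂ k, halfPlane (v k) (v (k + 1))) ∩ {w : K × K | w.2 ≤ 1} ∩ {w : K × K | w.1 + w.2 ≤ 1} ∩
    (⋂ k, -halfPlane (v k) (v (k + 1))) ∩ (-{w : K × K | w.2 ≤ 1}) ∩
    (-{w : K × K | w.1 + w.2 ≤ 1})


section Gauge

variable {K : Type*} [Field K] [LinearOrder K]
  {E : Type*} [AddCommGroup E] [Module K E] {D : Set E} {u : E} {r : K}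

def IsBoundaryScale (D : Set E) (u : E) (r : K) : Prop :=
  0 < r ∧ r • u ∈ D ∧ ∀ s : K, r < s → s • u ∉ D

theorem IsBoundaryScale.unique {r' : K} (h : IsBoundaryScale D u r)
    (h' : IsBoundaryScale D u r') : r = r' := by
  by_contra hne
  rcases lt_or_gt_of_ne hne with hlt | hlt
  · exact h.2.2 r' hlt h'.2.1
  · exact h'.2.2 r hlt h.2.1

theorem IsBoundaryScale.neg (hsym : -D = D) (h : IsBoundaryScale D u r) :
    IsBoundaryScale D (-u) r := by
  have hneg : ∀ {w : E}, -w ∈ D ↔ w ∈ D := fun {w} => by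
    rw [← Set.mem_neg, hsym]
  refine ⟨h.1, ?_, fun s hs hs_mem => h.2.2 s hs ?_⟩
  · rw [smul_neg, hneg]
    exact h.2.1
  · rwa [smul_neg, hneg] at hs_mem

variable (K) in
open Classical in
noncomputable def boundaryGauge (D : Set E) (u : E) : K :=
  if h : ∃ r : K, IsBoundaryScale D u r then (Classical.choose h)⁻¹ else 0

theorem IsBoundaryScale.boundaryGauge_eq (h : IsBoundaryScale D u r) :
    boundaryGauge K D u = r⁻¹ := by
  have hex : ∃ r : K, IsBoundaryScale D u r := ⟨r, h⟩
  rw [boundaryGauge, dif_pos hex, (Classical.choose_spec hex).unique h]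

variable [IsStrictOrderedRing K]

theorem isBoundaryScale_of_support (φ : E →ₗ[K] K) (hr : 0 < r) (hmem : r • u ∈ D)
    (hsupp : ∀ w ∈ D, φ w ≤ φ (r • u)) (hpos : 0 < φ (r • u)) :
    IsBoundaryScale D u r := by
  refine ⟨hr, hmem, fun s hs hs_mem => ?_⟩
  have hu : 0 < φ u := by
    rw [map_smul, smul_eq_mul] at hpos
    exact pos_of_mul_pos_right hpos hr.le
  have := hsupp _ hs_mem
  rw [map_smul, map_smul, smul_eq_mul, smul_eq_mul] at this
  exact (mul_lt_mul_of_pos_right hs hu).not_ge this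

theorem IsBoundaryScale.smul_mem_iff (hD : Convex K D) (h0 : (0 : E) ∈ D)
    (h : IsBoundaryScale D u r) {t : K} (ht : 0 ≤ t) : t • u ∈ D ↔ t ≤ r := by
  refine ⟨fun hmem => le_of_not_gt fun hlt => h.2.2 t hlt hmem, fun hle => ?_⟩
  have hr := h.1
  have := hD.smul_mem_of_zero_mem h0 h.2.1 ⟨div_nonneg ht hr.le, (div_le_one hr).2 hle⟩
  rwa [smul_smul, div_mul_cancel₀ _ hr.ne'] at this

theorem IsBoundaryScale.smul_of_pos (h : IsBoundaryScale D u r) {c : K} (hc : 0 < c) :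
    IsBoundaryScale D (c • u) (r / c) := by
  refine ⟨div_pos h.1 hc, ?_, fun s hs hs_mem => h.2.2 (s * c) ?_ ?_⟩
  · rw [smul_smul, div_mul_cancel₀ _ hc.ne']
    exact h.2.1
  · exact (div_lt_iff₀ hc).1 hs
  · rwa [smul_smul] at hs_mem

theorem IsBoundaryScale.smul (hsym : -D = D) (h : IsBoundaryScale D u r) {c : K} (hc : c ≠ 0) :
    IsBoundaryScale D (c • u) (r / |c|) := by
  rcases hc.lt_or_gt with hc | hc
  · rw [abs_of_neg hc, ← neg_neg c, neg_smul, ← smul_neg, neg_neg]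
    exact (h.neg hsym).smul_of_pos (neg_pos.2 hc)
  · rw [abs_of_pos hc]
    exact h.smul_of_pos hc

theorem boundaryGauge_zero (h0 : (0 : E) ∈ D) : boundaryGauge K D (0 : E) = 0 := by
  refine dif_neg fun ⟨r, hr⟩ => hr.2.2 (r + 1) (lt_add_one r) ?_
  rwa [smul_zero]

section Norm

variable (hD : Convex K D) (hsym : -D = D) (h0 : (0 : E) ∈ D)
  (hscale : ∀ u : E, u ≠ 0 → ∃ r : K, IsBoundaryScale D u r)

include hscale in
theorem boundaryGauge_pos (hu : u ≠ 0) : 0 < boundaryGauge K D u := by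
  obtain ⟨r, hr⟩ := hscale u hu
  rw [hr.boundaryGauge_eq]
  exact inv_pos.2 hr.1

include h0 hscale in
theorem boundaryGauge_eq_zero_iff : boundaryGauge K D u = 0 ↔ u = 0 :=
  ⟨fun h => by_contra fun hu => (boundaryGauge_pos hscale hu).ne' h,
    fun h => h ▸ boundaryGauge_zero h0⟩

include hD h0 hscale in
theorem mem_iff_boundaryGauge_le_one : u ∈ D ↔ boundaryGauge K D u ≤ 1 := by
  rcases eq_or_ne u 0 with rfl | hu
  · simp only [h0, boundaryGauge_zero h0, zero_le_one]
  obtain ⟨r, hr⟩ := hscale u hu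
  rw [hr.boundaryGauge_eq, inv_le_one₀ hr.1, ← hr.smul_mem_iff hD h0 zero_le_one, one_smul]

include hsym h0 hscale in
theorem boundaryGauge_smul (c : K) (u : E) :
    boundaryGauge K D (c • u) = |c| * boundaryGauge K D u := by
  rcases eq_or_ne c 0 with rfl | hc
  · rw [zero_smul, boundaryGauge_zero h0, abs_zero, zero_mul]
  rcases eq_or_ne u 0 with rfl | hu
  · rw [smul_zero, boundaryGauge_zero h0, mul_zero]
  obtain ⟨r, hr⟩ := hscale u hu
  rw [(hr.smul hsym hc).boundaryGauge_eq, hr.boundaryGauge_eq, inv_div, div_eq_mul_inv]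

include hD hsym h0 hscale in
theorem boundaryGauge_add_le (u w : E) :
    boundaryGauge K D (u + w) ≤ boundaryGauge K D u + boundaryGauge K D w := by
  rcases eq_or_ne u 0 with rfl | hu
  · rw [zero_add, boundaryGauge_zero h0, zero_add]
  rcases eq_or_ne w 0 with rfl | hw
  · rw [add_zero, boundaryGauge_zero h0, add_zero]
  set N := boundaryGauge K D
  have hNu := boundaryGauge_pos hscale hu
  have hNw := boundaryGauge_pos hscale hw
  have hnormalize : ∀ {x : E}, 0 < N x → (N x)⁻¹ • x ∈ D := fun hx => by
    rw [mem_iff_boundaryGauge_le_one hD h0 hscale, boundaryGauge_smul hsym h0 hscale,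
      abs_of_pos (inv_pos.2 hx), inv_mul_cancel₀ hx.ne']
  have hweight : ∀ {x : K}, 0 < x → x / (N u + N w) * x⁻¹ = (N u + N w)⁻¹ := fun hx => by
    field_simp
  have hcombo : (N u + N w)⁻¹ • (u + w) ∈ D := by
    have := convex_iff_div.1 hD (hnormalize hNu) (hnormalize hNw) hNu.le hNw.le (by positivity)
    rwa [smul_smul, smul_smul, hweight hNu, hweight hNw, ← smul_add] at this
  rw [mem_iff_boundaryGauge_le_one hD h0 hscale, boundaryGauge_smul hsym h0 hscale,
    abs_of_pos (by positivity), inv_mul_le_iff₀ (by positivity), mul_one] at hcombo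
  exact hcombo

end Norm

end Gauge

section Wedge

variable {R : Type*} [CommRing R]

def wedge (p : R × R) : R × R →ₗ[R] R :=
  p.1 • LinearMap.snd R R R - p.2 • LinearMap.fst R R R

@[simp]
theorem wedge_apply (p q : R × R) : wedge p q = p.1 * q.2 - p.2 * q.1 := by
  simp [wedge]

theorem wedge_self (p : R × R) : wedge p p = 0 := by
  rw [wedge_apply, mul_comm, sub_self]

theorem wedge_comm (p q : R × R) : wedge p q = -wedge q p := by
  simp only [wedge_apply]
  ring

def edge (v : ℕ → R × R) (k : ℕ) : R × R := v (k + 1) - v k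

theorem vertex_succ (v : ℕ → R × R) (n : ℕ) : v (n + 1) = v n + edge v n := by
  rw [edge, add_sub_cancel]

theorem wedge_edge_vertex_succ (v : ℕ → R × R) (k n : ℕ) :
    wedge (edge v k) (v (n + 1)) = wedge (edge v k) (v n) + wedge (edge v k) (edge v n) := by
  rw [vertex_succ v n, map_add]

end Wedge

section DiscD

variable {K : Type*} [Field K] [LinearOrder K] [IsStrictOrderedRing K]

theorem cross_eq_wedge (p r w : K × K) : cross p r w = wedge (r - p) w - wedge (r - p) p := by
  simp only [cross, wedge_apply, Prod.fst_sub, Prod.snd_sub]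
  ring

theorem mem_halfPlane_iff {p r w : K × K} (h : 0 < wedge (r - p) p) :
    w ∈ halfPlane p r ↔ wedge (r - p) w ≤ wedge (r - p) p := by
  rw [halfPlane, Set.mem_ofPred_eq, cross_eq_wedge, cross_eq_wedge, Prod.mk_zero_zero, map_zero,
    zero_sub, show ∀ x c : K, (x - c) * -c = (c - x) * c from fun _ _ => by ring,
    mul_nonneg_iff_of_pos_right h, sub_nonneg]

theorem convex_halfPlane (p r : K × K) : Convex K (halfPlane p r) := by
  have : halfPlane p r =
      {w | cross p r 0 * wedge (r - p) p ≤ (cross p r 0 • wedge (r - p)) w} := by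
    ext w
    simp only [halfPlane, Set.mem_ofPred_eq, Prod.mk_zero_zero, cross_eq_wedge p r w,
      LinearMap.smul_apply, smul_eq_mul]
    constructor <;> intro h <;> linarith
  rw [this]
  exact convex_halfSpace_ge (LinearMap.isLinear _) _

variable (v : ℕ → K × K)

theorem convex_discD : Convex K (discD v) := by
  have hsnd : Convex K {w : K × K | w.2 ≤ 1} :=
    convex_halfSpace_le (LinearMap.snd K K K).isLinear 1
  have hsum : Convex K {w : K × K | w.1 + w.2 ≤ 1} :=
    convex_halfSpace_le (LinearMap.fst K K K + LinearMap.snd K K K).isLinear 1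
  have hH : Convex K (⋂ k, halfPlane (v k) (v (k + 1))) :=
    convex_iInter fun k => convex_halfPlane _ _
  exact ((((hH.inter hsnd).inter hsum).inter
    (convex_iInter fun k => (convex_halfPlane _ _).neg)).inter hsnd.neg).inter hsum.neg

theorem neg_discD : -discD v = discD v := by
  ext w
  simp only [discD, Set.mem_neg, Set.mem_inter_iff, Set.mem_iInter, neg_neg]
  tauto

end DiscD

section Chain

variable {K : Type*} [Field K] [LinearOrder K] [IsStrictOrderedRing K] {v : ℕ → K × K}

theorem monotone_fst_of_edge_fst_nonneg (h : ∀ k, 0 ≤ (edge v k).1) :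
    Monotone fun m => (v m).1 :=
  monotone_nat_of_le_succ fun n => by simpa [vertex_succ v n] using h n

theorem monotone_snd_of_edge_snd_nonneg (h : ∀ k, 0 ≤ (edge v k).2) :
    Monotone fun m => (v m).2 :=
  monotone_nat_of_le_succ fun n => by simpa [vertex_succ v n] using h n

variable (hturn : ∀ i j, i < j → wedge (edge v i) (edge v j) ≤ 0)
include hturn

theorem wedge_edge_vertex_antitone {k m n : ℕ} (hkm : k ≤ m) (hmn : m ≤ n) :
    wedge (edge v k) (v n) ≤ wedge (edge v k) (v m) :=
  antitoneOn_nat_Ici_of_succ_le (f := fun n => wedge (edge v k) (v n))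
    (fun n hn => by
      have hturn_kn : wedge (edge v k) (edge v n) ≤ 0 := by
        rcases hn.eq_or_lt with rfl | hn
        · rw [wedge_self]
        · exact hturn k n hn
      simp only [wedge_edge_vertex_succ]
      linarith)
    hkm (hkm.trans hmn) hmn

theorem wedge_edge_vertex_monotone {k m n : ℕ} (hmn : m ≤ n) (hnk : n ≤ k) :
    wedge (edge v k) (v m) ≤ wedge (edge v k) (v n) := by
  induction n, hmn using Nat.le_induction with
  | base => exact le_rfl
  | succ n _ ih =>
    have hturn_nk : 0 ≤ wedge (edge v k) (edge v n) := by
      rw [wedge_comm, neg_nonneg]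
      exact hturn n k hnk
    rw [wedge_edge_vertex_succ]
    linarith [ih (Nat.le_of_succ_le hnk)]

theorem wedge_edge_vertex_le (k m : ℕ) : wedge (edge v k) (v m) ≤ wedge (edge v k) (v k) := by
  rcases le_total k m with h | h
  · exact wedge_edge_vertex_antitone hturn le_rfl h
  · exact wedge_edge_vertex_monotone hturn h le_rfl

end Chain

section Crossing

variable {K : Type*} [Field K] [LinearOrder K] [IsStrictOrderedRing K]
  {E : Type*} [AddCommGroup E] [Module K E]

theorem exists_apply_segment_eq_zero (φ : E →ₗ[K] K) {p q : E} (hp : 0 < φ p)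
    (hq : φ q ≤ 0) :
    ∃ t : K, 0 < t ∧ t ≤ 1 ∧ φ ((1 - t) • p + t • q) = 0 := by
  have hden : 0 < φ p - φ q := by linarith
  refine ⟨φ p / (φ p - φ q), div_pos hp hden, (div_le_one hden).2 (by linarith), ?_⟩
  rw [map_add, map_smul, map_smul, smul_eq_mul, smul_eq_mul]
  field_simp
  ring

theorem eq_smul_of_wedge_eq_zero {u z : K × K} (h : wedge u z = 0) (hu : u.2 ≠ 0) :
    z = (z.2 / u.2) • u := by
  rw [wedge_apply, sub_eq_zero] at h
  ext
  · simp only [Prod.smul_fst, smul_eq_mul]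
    field_simp
    linarith
  · simp only [Prod.smul_snd, smul_eq_mul]
    field_simp

end Crossing

section DiscChain

variable {K : Type*} [Field K] [LinearOrder K] [IsStrictOrderedRing K]

/-- `wedge_edge_nonpos` says that the chain turns clockwise. `exists_wedge_le` says that for each
edge some vertex, projected from the origin onto the line `y = 1`, lies on the origin's side of
that edge's line: this puts the part of `y = 1` beyond the chain on the boundary of `discD v`. -/
structure IsDiscChain (v : ℕ → K × K) : Prop where
  zero : v 0 = (-1, 0)
  edge_fst_nonneg : ∀ k, 0 ≤ (edge v k).1
  edge_snd_pos : ∀ k, 0 < (edge v k).2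
  wedge_edge_nonpos : ∀ i j, i < j → wedge (edge v i) (edge v j) ≤ 0
  fst_neg : ∀ m, (v m).1 < 0
  snd_le_one : ∀ m, (v m).2 ≤ 1
  exists_wedge_le : ∀ k, ∃ m, 0 < (v m).2 ∧
    wedge (edge v k) (v m) ≤ (v m).2 * wedge (edge v k) (v k)

namespace IsDiscChain

variable {v : ℕ → K × K} (hv : IsDiscChain v)
include hv

theorem monotone_snd : Monotone fun m => (v m).2 :=
  monotone_snd_of_edge_snd_nonneg fun k => (hv.edge_snd_pos k).le

theorem neg_one_le_fst (m : ℕ) : -1 ≤ (v m).1 := by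
  simpa [hv.zero] using monotone_fst_of_edge_fst_nonneg hv.edge_fst_nonneg (Nat.zero_le m)

theorem snd_nonneg (m : ℕ) : 0 ≤ (v m).2 := by
  simpa [hv.zero] using hv.monotone_snd (Nat.zero_le m)

theorem snd_pos {m : ℕ} (hm : 0 < m) : 0 < (v m).2 := by
  have h1 : 0 < (v 1).2 := by simpa [vertex_succ v 0, hv.zero] using hv.edge_snd_pos 0
  exact h1.trans_le (hv.monotone_snd hm)

theorem wedge_edge_vertex_pos (k m : ℕ) : 0 < wedge (edge v k) (v m) := by
  rw [wedge_apply]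
  nlinarith [mul_nonneg (hv.edge_fst_nonneg k) (hv.snd_nonneg m),
    mul_pos (hv.edge_snd_pos k) (neg_pos.2 (hv.fst_neg m))]

theorem mem_discD_iff {w : K × K} : w ∈ discD v ↔
    (∀ k, |wedge (edge v k) w| ≤ wedge (edge v k) (v k)) ∧ |w.2| ≤ 1 ∧
      |w.1 + w.2| ≤ 1 := by
  have hH : ∀ k {w}, w ∈ halfPlane (v k) (v (k + 1)) ↔
      wedge (edge v k) w ≤ wedge (edge v k) (v k) :=
    fun k => mem_halfPlane_iff (hv.wedge_edge_vertex_pos k k)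
  simp only [discD, Set.mem_inter_iff, Set.mem_iInter, Set.mem_neg, hH, Set.mem_ofPred_eq,
    map_neg, abs_le, Prod.fst_neg, Prod.snd_neg]
  constructor
  · rintro ⟨⟨⟨⟨⟨h1, h2⟩, h3⟩, h4⟩, h5⟩, h6⟩
    exact ⟨fun k => ⟨by linarith [h4 k], h1 k⟩, ⟨by linarith, h2⟩,
      ⟨by linarith, h3⟩⟩
  · rintro ⟨h1, h2, h3⟩
    exact ⟨⟨⟨⟨⟨fun k => (h1 k).2, h2.2⟩, h3.2⟩, fun k => by linarith [(h1 k).1]⟩,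
      by linarith⟩, by linarith⟩

theorem vertex_mem (m : ℕ) : v m ∈ discD v := by
  refine hv.mem_discD_iff.2
    ⟨fun k => ?_, abs_le.2 ⟨?_, hv.snd_le_one m⟩, abs_le.2 ⟨?_, ?_⟩⟩
  · rw [abs_of_pos (hv.wedge_edge_vertex_pos k m)]
    exact wedge_edge_vertex_le hv.wedge_edge_nonpos k m
  · linarith [hv.snd_nonneg m]
  · linarith [hv.neg_one_le_fst m, hv.snd_nonneg m]
  · linarith [hv.fst_neg m, hv.snd_le_one m]

theorem zero_mem : (0 : K × K) ∈ discD v :=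
  hv.mem_discD_iff.2
    ⟨fun k => by simpa using (hv.wedge_edge_vertex_pos k k).le, by simp, by simp⟩

theorem one_zero_mem : ((1, 0) : K × K) ∈ discD v := by
  refine hv.mem_discD_iff.2 ⟨fun k => ?_, by simp, by simp⟩
  have := wedge_edge_vertex_le hv.wedge_edge_nonpos k 0
  rw [hv.zero, wedge_apply] at this
  rw [wedge_apply, abs_le]
  constructor <;> linarith [hv.edge_snd_pos k]

theorem zero_one_mem : ((0, 1) : K × K) ∈ discD v := by
  refine hv.mem_discD_iff.2 ⟨fun k => ?_, by simp, by simp⟩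
  obtain ⟨m, hm, hle⟩ := hv.exists_wedge_le k
  have hfst : (edge v k).1 * (v m).2 < (v m).2 * wedge (edge v k) (v k) := by
    rw [wedge_apply] at hle
    nlinarith [mul_pos (hv.edge_snd_pos k) (neg_pos.2 (hv.fst_neg m))]
  rw [mul_comm] at hfst
  have := lt_of_mul_lt_mul_left hfst hm.le
  rw [wedge_apply, abs_le]
  constructor <;> nlinarith [hv.edge_fst_nonneg k, hv.wedge_edge_vertex_pos k k]

theorem isBoundaryScale_of_fst_nonneg {u : K × K} (hu1 : 0 ≤ u.1) (hu2 : 0 ≤ u.2)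
    (hu : 0 < u.1 + u.2) : IsBoundaryScale (discD v) u (u.1 + u.2)⁻¹ := by
  set r := (u.1 + u.2)⁻¹
  have hr : 0 < r := inv_pos.2 hu
  have hru : r * (u.1 + u.2) = 1 := inv_mul_cancel₀ hu.ne'
  have hval : (LinearMap.fst K K K + LinearMap.snd K K K) (r • u) = 1 := by
    simp only [LinearMap.add_apply, LinearMap.fst_apply, LinearMap.snd_apply, Prod.smul_fst,
      Prod.smul_snd, smul_eq_mul, ← mul_add, hru]
  have hcombo : (r * u.1) • ((1, 0) : K × K) + (r * u.2) • ((0, 1) : K × K) = r • u := by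
    ext <;> simp
  refine isBoundaryScale_of_support _ hr ?_ (fun w hw => ?_) (hval ▸ one_pos)
  · rw [← hcombo]
    exact convex_discD v hv.one_zero_mem hv.zero_one_mem (mul_nonneg hr.le hu1)
      (mul_nonneg hr.le hu2) (by rw [← mul_add, hru])
  · rw [hval]
    exact (abs_le.1 (hv.mem_discD_iff.1 hw).2.2).2

theorem exists_isBoundaryScale_of_exists_wedge_nonpos {u : K × K} (hu2 : 0 < u.2)
    (h : ∃ m, wedge u (v m) ≤ 0) : ∃ r : K, IsBoundaryScale (discD v) u r := by
  classical
  have hm : wedge u (v (Nat.find h)) ≤ 0 := Nat.find_spec h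
  obtain ⟨k, hk⟩ : ∃ k, Nat.find h = k + 1 := by
    refine Nat.exists_eq_succ_of_ne_zero fun h0 => ?_
    rw [h0, hv.zero, wedge_apply] at hm
    simp at hm
    linarith
  rw [hk] at hm
  have hk_pos : 0 < wedge u (v k) := not_le.1 (Nat.find_min h (by omega))
  obtain ⟨t, ht0, ht1, hz⟩ := exists_apply_segment_eq_zero (wedge u) hk_pos hm
  set z := (1 - t) • v k + t • v (k + 1)
  have hz_mem : z ∈ discD v :=
    convex_discD v (hv.vertex_mem k) (hv.vertex_mem (k + 1)) (by linarith) ht0.le (by ring)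
  have hz_edge : wedge (edge v k) z = wedge (edge v k) (v k) := by
    simp only [z, map_add, map_smul, smul_eq_mul, wedge_edge_vertex_succ, wedge_self]
    ring
  have hz_snd : 0 < z.2 := by
    simp only [z, Prod.snd_add, Prod.smul_snd, smul_eq_mul]
    nlinarith [hv.snd_nonneg k, hv.snd_pos (Nat.succ_pos k)]
  have hz_eq : z = (z.2 / u.2) • u := eq_smul_of_wedge_eq_zero hz hu2.ne'
  refine ⟨z.2 / u.2, isBoundaryScale_of_support (wedge (edge v k)) (div_pos hz_snd hu2)
    (hz_eq ▸ hz_mem) (fun w hw => ?_) ?_⟩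
  · rw [← hz_eq, hz_edge]
    exact (abs_le.1 ((hv.mem_discD_iff.1 hw).1 k)).2
  · rw [← hz_eq, hz_edge]
    exact hv.wedge_edge_vertex_pos k k

theorem wedge_edge_le_of_forall_wedge_pos {u : K × K} (hu2 : 0 < u.2)
    (h : ∀ m, 0 < wedge u (v m)) (k : ℕ) :
    wedge (edge v k) u ≤ u.2 * wedge (edge v k) (v k) := by
  obtain ⟨m, hm, hle⟩ := hv.exists_wedge_le k
  have key : (v m).2 * wedge (edge v k) u ≤ u.2 * wedge (edge v k) (v m) := by
    have hid : (v m).2 * wedge (edge v k) u - u.2 * wedge (edge v k) (v m) =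
        -((edge v k).2 * wedge u (v m)) := by
      simp only [wedge_apply]
      ring
    nlinarith [mul_pos (hv.edge_snd_pos k) (h m)]
  refine le_of_mul_le_mul_left ?_ hm
  nlinarith [mul_le_mul_of_nonneg_left hle hu2.le]

theorem isBoundaryScale_of_forall_wedge_pos {u : K × K} (hu1 : u.1 < 0) (hu2 : 0 < u.2)
    (h : ∀ m, 0 < wedge u (v m)) : IsBoundaryScale (discD v) u (u.2)⁻¹ := by
  have hbound := hv.wedge_edge_le_of_forall_wedge_pos hu2 h
  have hr : 0 < (u.2)⁻¹ := inv_pos.2 hu2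
  have hval : (LinearMap.snd K K K) ((u.2)⁻¹ • u) = 1 := by
    simp [hu2.ne']
  have hsum : 0 ≤ u.1 + u.2 := by
    have := hbound 0
    rw [hv.zero, wedge_apply, wedge_apply] at this
    nlinarith [hv.edge_snd_pos 0, mul_nonneg (hv.edge_fst_nonneg 0) hu2.le]
  refine isBoundaryScale_of_support _ hr ?_ (fun w hw => ?_) (hval ▸ one_pos)
  · refine hv.mem_discD_iff.2 ⟨fun k => ?_, ?_, ?_⟩
    · have hpos : 0 ≤ wedge (edge v k) u := by
        rw [wedge_apply]
        nlinarith [mul_nonneg (hv.edge_fst_nonneg k) hu2.le,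
          mul_pos (hv.edge_snd_pos k) (neg_pos.2 hu1)]
      rw [map_smul, smul_eq_mul, abs_of_nonneg (mul_nonneg hr.le hpos), inv_mul_le_iff₀ hu2]
      exact hbound k
    · simp [hu2.ne']
    · rw [Prod.smul_fst, Prod.smul_snd, smul_eq_mul, smul_eq_mul, ← mul_add, abs_le,
        le_inv_mul_iff₀ hu2, inv_mul_le_iff₀ hu2]
      constructor <;> linarith
  · rw [hval]
    exact (abs_le.1 (hv.mem_discD_iff.1 hw).2.1).2

theorem exists_isBoundaryScale {u : K × K} (hu : u ≠ 0) :
    ∃ r : K, IsBoundaryScale (discD v) u r := by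
  wlog hup : 0 < u.2 ∨ (u.2 = 0 ∧ 0 < u.1) generalizing u
  · have hneg : 0 < (-u).2 ∨ ((-u).2 = 0 ∧ 0 < (-u).1) := by
      simp only [Prod.fst_neg, Prod.snd_neg, neg_pos, neg_eq_zero]
      rcases lt_trichotomy u.2 0 with h2 | h2 | h2
      · exact Or.inl h2
      · rcases lt_trichotomy u.1 0 with h1 | h1 | h1
        · exact Or.inr ⟨h2, h1⟩
        · exact absurd (Prod.ext h1 h2) hu
        · exact absurd (Or.inr ⟨h2, h1⟩) hup
      · exact absurd (Or.inl h2) hup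
    obtain ⟨r, hr⟩ := this (neg_ne_zero.2 hu) hneg
    exact ⟨r, neg_neg u ▸ hr.neg (neg_discD v)⟩
  rcases le_or_gt 0 u.1 with hu1 | hu1
  · have hu2 : 0 ≤ u.2 := by rcases hup with h | ⟨h, -⟩ <;> linarith
    have hsum : 0 < u.1 + u.2 := by rcases hup with h | ⟨h, h'⟩ <;> linarith
    exact ⟨_, hv.isBoundaryScale_of_fst_nonneg hu1 hu2 hsum⟩
  have hu2 : 0 < u.2 := hup.resolve_right fun h => by linarith [h.2]
  by_cases hcross : ∃ m, wedge u (v m) ≤ 0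
  · exact hv.exists_isBoundaryScale_of_exists_wedge_nonpos hu2 hcross
  · push Not at hcross
    exact ⟨_, hv.isBoundaryScale_of_forall_wedge_pos hu1 hu2 hcross⟩

end IsDiscChain

end DiscChain

section RatCast

variable {K : Type*} [Field K] [LinearOrder K] [IsStrictOrderedRing K]

theorem wedge_ratCast (p q : ℚ × ℚ) :
    wedge ((p.1 : K), (p.2 : K)) ((q.1 : K), (q.2 : K)) = ((wedge p q : ℚ) : K) := by
  simp

theorem edge_ratCast (v : ℕ → ℚ × ℚ) (k : ℕ) :
    edge (fun m => (((v m).1 : K), ((v m).2 : K))) k =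
      (((edge v k).1 : K), ((edge v k).2 : K)) := by
  simp [edge]

theorem IsDiscChain.ratCast {v : ℕ → ℚ × ℚ} (hv : IsDiscChain v) :
    IsDiscChain fun m => (((v m).1 : K), ((v m).2 : K)) where
  zero := by simp [hv.zero]
  edge_fst_nonneg k := by
    rw [edge_ratCast]
    dsimp only
    exact_mod_cast hv.edge_fst_nonneg k
  edge_snd_pos k := by
    rw [edge_ratCast]
    dsimp only
    exact_mod_cast hv.edge_snd_pos k
  wedge_edge_nonpos i j hij := by
    rw [edge_ratCast, edge_ratCast, wedge_ratCast]
    exact_mod_cast hv.wedge_edge_nonpos i j hij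
  fst_neg m := by
    dsimp only
    exact_mod_cast hv.fst_neg m
  snd_le_one m := by
    dsimp only
    exact_mod_cast hv.snd_le_one m
  exists_wedge_le k := by
    obtain ⟨m, hm, hle⟩ := hv.exists_wedge_le k
    refine ⟨m, by dsimp only; exact_mod_cast hm, ?_⟩
    rw [edge_ratCast, wedge_ratCast, wedge_ratCast]
    dsimp only
    exact_mod_cast hle

end RatCast

section RatVertex

open Filter Topology

variable {a b : ℕ → ℚ} {aa bb : ℚ}

def ratVertex (a b : ℕ → ℚ) (bb : ℚ) : ℕ → ℚ × ℚ
  | 0 => (-1, 0)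
  | 1 => (-1, 1 - bb)
  | k + 2 => ratVertex a b bb (k + 1) + ((1 - b k) * a k, b k * a k)

theorem edge_ratVertex_zero : edge (ratVertex a b bb) 0 = (0, 1 - bb) := by
  simp [edge, ratVertex]

theorem edge_ratVertex_succ (k : ℕ) :
    edge (ratVertex a b bb) (k + 1) = ((1 - b k) * a k, b k * a k) := by
  simp [edge, ratVertex]

theorem ratVertex_succ (m : ℕ) : ratVertex a b bb (m + 1) =
    (-1 + ∑ j ∈ Finset.range m, (1 - b j) * a j,
      1 - bb + ∑ j ∈ Finset.range m, b j * a j) := by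
  induction m with
  | zero => simp [ratVertex]
  | succ m ih =>
    rw [ratVertex, ih, Finset.sum_range_succ, Finset.sum_range_succ]
    ext <;> simp only [Prod.fst_add, Prod.snd_add] <;> ring

theorem tendsto_ratVertex_fst (hasum : HasSum (fun k => ((a k : ℝ))) (aa : ℝ))
    (hbsum : HasSum (fun k => ((b k * a k : ℚ) : ℝ)) (bb : ℝ)) :
    Tendsto (fun m => ((ratVertex a b bb m).1 : ℝ)) atTop (𝓝 (aa - bb - 1)) := by
  rw [← tendsto_add_atTop_iff_nat 1]
  have := (tendsto_const_nhds (x := (-1 : ℝ))).add (hasum.sub hbsum).tendsto_sum_nat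
  convert this using 2 with m
  · simp [ratVertex_succ, sub_mul]
  · ring

theorem tendsto_ratVertex_snd (hbsum : HasSum (fun k => ((b k * a k : ℚ) : ℝ)) (bb : ℝ)) :
    Tendsto (fun m => ((ratVertex a b bb m).2 : ℝ)) atTop (𝓝 1) := by
  rw [← tendsto_add_atTop_iff_nat 1]
  have := (tendsto_const_nhds (x := (1 - bb : ℝ))).add hbsum.tendsto_sum_nat
  convert this using 2 with m
  · simp [ratVertex_succ]
  · ring

variable (ha : ∀ k, 0 < a k) (hb0 : ∀ k, 0 < b k) (hb1 : b 0 < 1) (hbanti : StrictAnti b)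
  (hasum : HasSum (fun k => ((a k : ℝ))) (aa : ℝ)) (haa : aa < 1)
  (hbsum : HasSum (fun k => ((b k * a k : ℚ) : ℝ)) (bb : ℝ)) (hab : aa - bb - 1 < 0)

include hb1 hbanti in
theorem lt_one_of_strictAnti (k : ℕ) : b k < 1 :=
  (hbanti.antitone (Nat.zero_le k)).trans_lt hb1

include ha hb1 hbanti hasum haa hbsum in
theorem sum_mul_lt_one : bb < 1 := by
  have : (bb : ℝ) ≤ aa := hasSum_le (fun k => by
    exact_mod_cast mul_le_of_le_one_left (ha k).le (lt_one_of_strictAnti hb1 hbanti k).le)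
    hbsum hasum
  exact (by exact_mod_cast this : bb ≤ aa).trans_lt haa

include ha hb1 hbanti hasum haa hbsum in
theorem wedge_edge_ratVertex_neg {i j : ℕ} (hij : i < j) :
    wedge (edge (ratVertex a b bb) i) (edge (ratVertex a b bb) j) < 0 := by
  obtain ⟨j, rfl⟩ := Nat.exists_eq_add_one_of_ne_zero (Nat.ne_zero_of_lt hij)
  rcases i with _ | i
  · have hbb := sum_mul_lt_one ha hb1 hbanti hasum haa hbsum
    rw [edge_ratVertex_zero, edge_ratVertex_succ, wedge_apply]
    nlinarith [mul_pos (mul_pos (sub_pos.2 hbb) (sub_pos.2 (lt_one_of_strictAnti hb1 hbanti j)))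
      (ha j)]
  · rw [edge_ratVertex_succ, edge_ratVertex_succ, wedge_apply]
    nlinarith [mul_pos (mul_pos (ha i) (ha j)) (sub_pos.2 (hbanti (Nat.lt_of_succ_lt_succ hij)))]

include ha hb1 hbanti in
theorem edge_ratVertex_fst_nonneg (k : ℕ) : 0 ≤ (edge (ratVertex a b bb) k).1 := by
  rcases k with _ | k
  · simp [edge_ratVertex_zero]
  · rw [edge_ratVertex_succ]
    exact mul_nonneg (sub_nonneg.2 (lt_one_of_strictAnti hb1 hbanti k).le) (ha k).le

include ha hb0 hb1 hbanti hasum haa hbsum in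
theorem edge_ratVertex_snd_pos (k : ℕ) : 0 < (edge (ratVertex a b bb) k).2 := by
  rcases k with _ | k
  · simpa [edge_ratVertex_zero] using sum_mul_lt_one ha hb1 hbanti hasum haa hbsum
  · rw [edge_ratVertex_succ]
    exact mul_pos (hb0 k) (ha k)

include ha hb1 hbanti hasum haa hbsum in
theorem exists_wedge_edge_ratVertex_le (k : ℕ) : ∃ m, 0 < (ratVertex a b bb m).2 ∧
    wedge (edge (ratVertex a b bb) k) (ratVertex a b bb m) ≤
      (ratVertex a b bb m).2 * wedge (edge (ratVertex a b bb) k) (ratVertex a b bb k) := by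
  set q := ratVertex a b bb
  set e := edge q k
  have hneg : ∀ {i j}, i < j → wedge (edge q i) (edge q j) < 0 :=
    wedge_edge_ratVertex_neg ha hb1 hbanti hasum haa hbsum
  -- the strict turn at `q (k + 1)` keeps the limit of the chain strictly inside the `k`-th
  -- half-plane
  have hfar : wedge e (q (k + 2)) < wedge e (q k) := by
    rw [wedge_edge_vertex_succ, wedge_edge_vertex_succ, wedge_self, add_zero]
    linarith [hneg (lt_add_one k)]
  have hlim : Tendsto (fun m => ((wedge e (q m) : ℚ) : ℝ)) atTop
      (𝓝 (e.1 * 1 - e.2 * (aa - bb - 1))) := by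
    simp only [wedge_apply, Rat.cast_sub, Rat.cast_mul]
    exact (tendsto_const_nhds.mul (tendsto_ratVertex_snd hbsum)).sub
      (tendsto_const_nhds.mul (tendsto_ratVertex_fst hasum hbsum))
  have hlim_le : e.1 * 1 - e.2 * (aa - bb - 1) ≤ ((wedge e (q (k + 2)) : ℚ) : ℝ) :=
    le_of_tendsto hlim ((eventually_ge_atTop (k + 2)).mono fun m hm => by
      exact_mod_cast wedge_edge_vertex_antitone (fun i j h => (hneg h).le) (by omega) hm)
  have hlim_lt : e.1 * 1 - e.2 * (aa - bb - 1) < 1 * ((wedge e (q k) : ℚ) : ℝ) := by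
    rw [one_mul]
    exact hlim_le.trans_lt (by exact_mod_cast hfar)
  obtain ⟨m, hm_pos, hm_lt⟩ :=
    ((tendsto_ratVertex_snd hbsum).eventually_const_lt zero_lt_one |>.and
      (hlim.eventually_lt ((tendsto_ratVertex_snd hbsum).mul_const _) hlim_lt)).exists
  exact ⟨m, by exact_mod_cast hm_pos, by exact_mod_cast hm_lt.le⟩

include ha hb0 hb1 hbanti hasum haa hbsum hab in
theorem isDiscChain_ratVertex : IsDiscChain (ratVertex a b bb) where
  zero := rfl
  edge_fst_nonneg := edge_ratVertex_fst_nonneg ha hb1 hbanti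
  edge_snd_pos := edge_ratVertex_snd_pos ha hb0 hb1 hbanti hasum haa hbsum
  wedge_edge_nonpos _ _ hij := (wedge_edge_ratVertex_neg ha hb1 hbanti hasum haa hbsum hij).le
  fst_neg m := by
    have hle : ((ratVertex a b bb m).1 : ℝ) ≤ aa - bb - 1 :=
      (Rat.cast_mono.comp (monotone_fst_of_edge_fst_nonneg
        (edge_ratVertex_fst_nonneg ha hb1 hbanti))).ge_of_tendsto
        (tendsto_ratVertex_fst hasum hbsum) m
    have hab' : (aa : ℝ) - bb - 1 < 0 := by exact_mod_cast hab
    exact_mod_cast hle.trans_lt hab'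
  snd_le_one m := by
    have hle : ((ratVertex a b bb m).2 : ℝ) ≤ 1 :=
      (Rat.cast_mono.comp (monotone_snd_of_edge_snd_nonneg fun k =>
        (edge_ratVertex_snd_pos ha hb0 hb1 hbanti hasum haa hbsum k).le)).ge_of_tendsto
        (tendsto_ratVertex_snd hbsum) m
    exact_mod_cast hle
  exists_wedge_le := exists_wedge_edge_ratVertex_le ha hb1 hbanti hasum haa hbsum

end RatVertex

theorem eq_ratVertex_ratCast {K : Type*} [Field K] [LinearOrder K] [IsStrictOrderedRing K]
    {a b : ℕ → ℚ} {bb : ℚ} {v : ℕ → K × K} (hv0 : v 0 = (-1, 0))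
    (hv1 : v 1 = (-1, 1 - (bb : K)))
    (hvrec : ∀ k, v (k + 2) =
      v (k + 1) + ((((1 - b k) * a k : ℚ) : K), ((b k * a k : ℚ) : K))) :
    v = fun m => (((ratVertex a b bb m).1 : K), ((ratVertex a b bb m).2 : K)) := by
  funext m
  induction m using Nat.twoStepInduction with
  | zero => simp [hv0, ratVertex]
  | one => simp [hv1, ratVertex]
  | more k _ ih =>
    rw [hvrec, ih]
    simp [ratVertex]

theorem stmt14 {K : Type*} [Field K] [LinearOrder K] [IsStrictOrderedRing K]
    (a b : ℕ → ℚ) (aa bb : ℚ)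
    (ha : ∀ k, 0 < a k)
    (hb0 : ∀ k, 0 < b k) (hb1 : b 0 < 1) (hbanti : StrictAnti b)
    (hasum : HasSum (fun k => ((a k : ℝ))) (aa : ℝ)) (haa : aa < 1)
    (hbsum : HasSum (fun k => ((b k * a k : ℚ) : ℝ)) (bb : ℝ))
    (hab : aa - bb - 1 < 0)
    (v : ℕ → K × K)
    (hv0 : v 0 = (-1, 0))
    (hv1 : v 1 = (-1, 1 - (bb : K)))
    (hvrec : ∀ k, v (k + 2) = v (k + 1) + ((((1 - b k) * a k : ℚ) : K), ((b k * a k : ℚ) : K))) :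
    Convex K (discD v) ∧ discD v = -discD v ∧
    (∀ u : K × K, u ≠ 0 →
      ∃! r : K, 0 < r ∧ r • u ∈ discD v ∧ ∀ s : K, r < s → s • u ∉ discD v) ∧
    ∃ N : K × K → K,
      (∀ u : K × K, N u = 0 ↔ u = 0) ∧
      (∀ (c : K) (u : K × K), N (c • u) = |c| * N u) ∧
      (∀ u w : K × K, N (u + w) ≤ N u + N w) ∧
      discD v = {u : K × K | N u ≤ 1} := by
  have hv : IsDiscChain v := by
    rw [eq_ratVertex_ratCast hv0 hv1 hvrec]
    exact (isDiscChain_ratVertex ha hb0 hb1 hbanti hasum haa hbsum hab).ratCast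
  have hscale : ∀ u : K × K, u ≠ 0 → ∃ r : K, IsBoundaryScale (discD v) u r :=
    fun u hu => hv.exists_isBoundaryScale hu
  have hconv := convex_discD v
  have hsym := neg_discD v
  refine ⟨hconv, hsym.symm, fun u hu => ?_, boundaryGauge K (discD v),
    fun u => boundaryGauge_eq_zero_iff hv.zero_mem hscale,
    boundaryGauge_smul hsym hv.zero_mem hscale,
    boundaryGauge_add_le hconv hsym hv.zero_mem hscale, ?_⟩
  · obtain ⟨r, hr⟩ := hscale u hu
    exact ⟨r, hr, fun r' hr' => (hr.unique hr').symm⟩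
  · ext u
    exact mem_iff_boundaryGauge_le_one hconv hv.zero_mem hscale
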